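/- No formula of L_S is characteristic for any process with respect to simulation equivalence: there is no φ ∈ L_S and no process p such that for every process q, q ⊨ φ if and only if p ≡_S q. -/

import Mathlib

/-- Finite, loop-free CCS processes over the action set `Act`:
`p ::= 0 | a.p | p + p`. -/
inductive Proc (Act : Type) : Type
  | nil : Proc Act
  | pre : Act → Proc Act → Proc Act
  | plus : Proc Act → Proc Act → Proc Act

/-- The transition relation: `a.p —a→ p`, and `p₁ + p₂ —a→ p'` iff
`p₁ —a→ p'` or `p₂ —a→ p'`. -/
inductive Step {Act : Type} : Proc Act → Act → Proc Act → Prop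
  | pre (a : Act) (p : Proc Act) : Step (Proc.pre a p) a p
  | plusL : ∀ {p₁ p₂ p' : Proc Act} {a : Act},
      Step p₁ a p' → Step (Proc.plus p₁ p₂) a p'
  | plusR : ∀ {p₁ p₂ p' : Proc Act} {a : Act},
      Step p₂ a p' → Step (Proc.plus p₁ p₂) a p'

/-- HML formulas in negation normal form:
`φ ::= tt | ff | φ∧φ | φ∨φ | ⟨a⟩φ | [a]φ`. -/
inductive HML (Act : Type) : Type
  | tt : HML Act
  | ff : HML Act
  | conj : HML Act → HML Act → HML Act
  | disj : HML Act → HML Act → HML Act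
  | dia : Act → HML Act → HML Act
  | box : Act → HML Act → HML Act

/-- The satisfaction relation `p ⊨ φ`. -/
def Sat {Act : Type} : Proc Act → HML Act → Prop
  | _, HML.tt => True
  | _, HML.ff => False
  | p, HML.conj φ ψ => Sat p φ ∧ Sat p ψ
  | p, HML.disj φ ψ => Sat p φ ∨ Sat p ψ
  | p, HML.dia a φ => ∃ p', Step p a p' ∧ Sat p' φ
  | p, HML.box a φ => ∀ p', Step p a p' → Sat p' φ

/-- `φ` entails `ψ` iff every process satisfying `φ` satisfies `ψ`. -/
def Entails {Act : Type} (φ ψ : HML Act) : Prop :=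
  ∀ p : Proc Act, Sat p φ → Sat p ψ

/-- `R` is a simulation relation. -/
def IsSimulation {Act : Type} (R : Proc Act → Proc Act → Prop) : Prop :=
  ∀ p q, R p q → ∀ a p', Step p a p' → ∃ q', Step q a q' ∧ R p' q'

/-- The simulation preorder `≲_S`: the largest simulation. -/
def Sim {Act : Type} (p q : Proc Act) : Prop :=
  ∃ R, IsSimulation R ∧ R p q

/-- The set `I(p)` of initial actions of a process. -/
def initials {Act : Type} (p : Proc Act) : Set Act :=
  {a | ∃ p', Step p a p'}

/-- The fragment `L_S`: `φ ::= tt | ff | φ∧φ | φ∨φ | ⟨a⟩φ`. -/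
inductive InLS {Act : Type} : HML Act → Prop
  | tt : InLS HML.tt
  | ff : InLS HML.ff
  | conj : ∀ {φ ψ : HML Act}, InLS φ → InLS ψ → InLS (HML.conj φ ψ)
  | disj : ∀ {φ ψ : HML Act}, InLS φ → InLS ψ → InLS (HML.disj φ ψ)
  | dia : ∀ {a : Act} {φ : HML Act}, InLS φ → InLS (HML.dia a φ)

/-!
Formulas of `L_S` are upward closed under `≲_S`. So if `φ ∈ L_S` characterised `p`, it would also hold of
`p + a.p`, which simulates `p`; hence `p + a.p ≲_S p`. But simulation cannot decrease the depth of a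
process, while `p + a.p` is one level deeper than `p`.
-/

variable {Act : Type}

def Proc.depth : Proc Act → ℕ
  | Proc.nil => 0
  | Proc.pre _ p => p.depth + 1
  | Proc.plus p q => max p.depth q.depth

theorem Step.depth_lt {p p' : Proc Act} {a : Act} (h : Step p a p') : p'.depth < p.depth := by
  induction h with
  | pre => simp [Proc.depth]
  | plusL _ ih => simp only [Proc.depth]; omega
  | plusR _ ih => simp only [Proc.depth]; omega

theorem isSimulation_sim : IsSimulation (Sim (Act := Act)) := by
  rintro p q ⟨R, hR, hpq⟩ a p' hp
  obtain ⟨q', hq, hpq'⟩ := hR p q hpq a p' hp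
  exact ⟨q', hq, R, hR, hpq'⟩

theorem sim_iff_forall_step {p q : Proc Act} :
    Sim p q ↔ ∀ a p', Step p a p' → ∃ q', Step q a q' ∧ Sim p' q' := by
  refine ⟨isSimulation_sim p q, fun h => ⟨fun x y => (x = p ∧ y = q) ∨ Sim x y, ?_, .inl ⟨rfl, rfl⟩⟩⟩
  rintro x y (⟨rfl, rfl⟩ | hxy) a x' hx
  · obtain ⟨q', hq, hxq'⟩ := h a x' hx
    exact ⟨q', hq, .inr hxq'⟩
  · obtain ⟨y', hy, hxy'⟩ := isSimulation_sim x y hxy a x' hx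
    exact ⟨y', hy, .inr hxy'⟩

theorem Sim.refl (p : Proc Act) : Sim p p :=
  ⟨Eq, fun _ _ hpq _ p' hp => ⟨p', hpq ▸ hp, rfl⟩, rfl⟩

theorem sim_plus_left (p r : Proc Act) : Sim p (Proc.plus p r) :=
  sim_iff_forall_step.2 fun _ p' hp => ⟨p', .plusL hp, Sim.refl p'⟩

theorem Sim.of_plus_left {p r q : Proc Act} (h : Sim (Proc.plus p r) q) : Sim p q :=
  sim_iff_forall_step.2 fun a _ hp => sim_iff_forall_step.1 h a _ (.plusL hp)

theorem Sim.of_plus_right {p r q : Proc Act} (h : Sim (Proc.plus p r) q) : Sim r q :=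
  sim_iff_forall_step.2 fun a _ hr => sim_iff_forall_step.1 h a _ (.plusR hr)

theorem Sim.depth_le {p q : Proc Act} (h : Sim p q) : p.depth ≤ q.depth := by
  induction p generalizing q with
  | nil => exact Nat.zero_le _
  | pre a p ih =>
    obtain ⟨q', hq, hpq'⟩ := sim_iff_forall_step.1 h a p (.pre a p)
    exact ih hpq' |>.trans_lt hq.depth_lt
  | plus p r ihp ihr => exact max_le (ihp h.of_plus_left) (ihr h.of_plus_right)

theorem InLS.sat_of_sim {φ : HML Act} (hφ : InLS φ) {p q : Proc Act} (hpq : Sim p q)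
    (hp : Sat p φ) : Sat q φ := by
  induction hφ generalizing p q with
  | tt => trivial
  | ff => exact hp.elim
  | conj _ _ ih₁ ih₂ => exact ⟨ih₁ hpq hp.1, ih₂ hpq hp.2⟩
  | disj _ _ ih₁ ih₂ => exact hp.imp (ih₁ hpq) (ih₂ hpq)
  | dia _ ih =>
    obtain ⟨p', hp', hφp'⟩ := hp
    obtain ⟨q', hq', hpq'⟩ := isSimulation_sim p q hpq _ p' hp'
    exact ⟨q', hq', ih hpq' hφp'⟩

theorem no_LS_characteristic_mod_simEquiv_general {Act : Type} [Nonempty Act] :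
    ¬ ∃ (φ : HML Act) (p : Proc Act), InLS φ ∧
      ∀ q : Proc Act, Sat q φ ↔ (Sim p q ∧ Sim q p) := by
  rintro ⟨φ, p, hφ, hchar⟩
  obtain ⟨a⟩ := ‹Nonempty Act›
  have hp : Sat p φ := (hchar p).2 ⟨Sim.refl p, Sim.refl p⟩
  have hq : Sat (Proc.plus p (Proc.pre a p)) φ := hφ.sat_of_sim (sim_plus_left p _) hp
  have hdepth := ((hchar _).1 hq).2.depth_le
  simp only [Proc.depth] at hdepth
  omega

/-- No formula of `L_S` is characteristic for any process with respect to
simulation equivalence. -/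
theorem no_LS_characteristic_mod_simEquiv {Act : Type} [Fintype Act] [Nonempty Act] :
    ¬ ∃ (φ : HML Act) (p : Proc Act), InLS φ ∧
      ∀ q : Proc Act, Sat q φ ↔ (Sim p q ∧ Sim q p) :=
  no_LS_characteristic_mod_simEquiv_general
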